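/- arXiv:2404.07830 — 5 statements merged into one kernel-verified Lean document; each statement's English description precedes it below -/
import Mathlib

section
/- Let m ≥ 1 be a natural number, γ > 1, K > 0, ρ_c > 0, b > 0, v_a > 0 with D := √(Kγ)·√(ρ_c^{γ-1} - ((γ-1)/(2Kγ))b²) > 0 and v_a·b > (m+1)·D. Then v_a + (Kγ)^{-1/2}(ρ_c^{γ-1} - ((γ-1)/(2Kγ))b²)^{-1/2}·b - (m/b)·(v_a b·D)/(v_a b - D) > v_a·(v_a b - (m+1)D)/(v_a b - D) ≥ 0. -/
/-! Splitting off `va`, the last two terms of `β(b,0)` combine to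
`va (va b - (m+1) D) / (va b - D)`, so `β(b,0)` exceeds this quantity by the strictly positive
term `(Kγ)^{-1/2} E^{-1/2} b`, where `E` is the radicand of `D`. Both `Kγ` and `E` are positive
because `D = √(Kγ) √E > 0`, and `va b - D > 0` follows from `(m+1) D < va b`. -/

lemma pos_and_pos_of_sqrt_mul_sqrt_pos {x y : ℝ} (h : 0 < √x * √y) : 0 < x ∧ 0 < y :=
  ⟨Real.sqrt_pos.mp (pos_of_mul_pos_left h (Real.sqrt_nonneg y)),
    Real.sqrt_pos.mp (pos_of_mul_pos_right h (Real.sqrt_nonneg x))⟩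

lemma sub_div_mul_div_sub_eq {m b v D : ℝ} (hb : b ≠ 0) (hden : v * b - D ≠ 0) :
    v - m / b * (v * b * D) / (v * b - D) = v * (v * b - (m + 1) * D) / (v * b - D) := by
  field_simp
  ring

theorem beta_at_b_positive_general (m : ℕ) (γ K ρc b va D : ℝ)
    (hb : 0 < b) (hva : 0 < va)
    (hD : D = Real.sqrt (K * γ) *
      Real.sqrt (ρc ^ (γ - 1) - ((γ - 1) / (2 * K * γ)) * b ^ 2))
    (hDpos : 0 < D)
    (hvb : (m + 1 : ℝ) * D < va * b) :
    va + (K * γ) ^ (-(1 : ℝ) / 2) *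
        (ρc ^ (γ - 1) - ((γ - 1) / (2 * K * γ)) * b ^ 2) ^ (-(1 : ℝ) / 2) * b -
      ((m : ℝ) / b) * (va * b * D) / (va * b - D) >
      va * (va * b - (m + 1 : ℝ) * D) / (va * b - D) ∧
    va * (va * b - (m + 1 : ℝ) * D) / (va * b - D) ≥ 0 := by
  set E := ρc ^ (γ - 1) - ((γ - 1) / (2 * K * γ)) * b ^ 2
  obtain ⟨hKγ, hE⟩ := pos_and_pos_of_sqrt_mul_sqrt_pos (hD ▸ hDpos)
  have hterm : 0 < (K * γ) ^ (-(1 : ℝ) / 2) * E ^ (-(1 : ℝ) / 2) * b :=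
    mul_pos (mul_pos (Real.rpow_pos_of_pos hKγ _) (Real.rpow_pos_of_pos hE _)) hb
  have hD_le : D ≤ (m + 1 : ℝ) * D :=
    le_mul_of_one_le_left hDpos.le (by linarith [m.cast_nonneg (α := ℝ)])
  have hden : 0 < va * b - D := by linarith
  have hnum : 0 < va * b - (m + 1 : ℝ) * D := by linarith
  have hsplit := sub_div_mul_div_sub_eq (m := (m : ℝ)) hb.ne' hden.ne'
  exact ⟨by linarith, by positivity⟩

theorem beta_at_b_positive (m : ℕ) (γ K ρc b va D : ℝ)
    (hm : 1 ≤ m) (hγ : 1 < γ) (hK : 0 < K) (hρc : 0 < ρc) (hb : 0 < b) (hva : 0 < va)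
    (hD : D = Real.sqrt (K * γ) *
      Real.sqrt (ρc ^ (γ - 1) - ((γ - 1) / (2 * K * γ)) * b ^ 2))
    (hDpos : 0 < D)
    (hvb : (m + 1 : ℝ) * D < va * b) :
    va + (K * γ) ^ (-(1 : ℝ) / 2) *
        (ρc ^ (γ - 1) - ((γ - 1) / (2 * K * γ)) * b ^ 2) ^ (-(1 : ℝ) / 2) * b -
      ((m : ℝ) / b) * (va * b * D) / (va * b - D) >
      va * (va * b - (m + 1 : ℝ) * D) / (va * b - D) ∧
    va * (va * b - (m + 1 : ℝ) * D) / (va * b - D) ≥ 0 :=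
  beta_at_b_positive_general m γ K ρc b va D hb hva hD hDpos hvb
end

section
/- Let 1 < γ < 3 and set λ = (3-γ)/(2(γ-1)), and suppose β satisfies the Riccati equation ∂₁β = -((1+γ)/4)β² - ((3-γ)/4)αβ + A₁α - B₁β and h satisfies ∂₁h = -((γ-1)/2)h(α + m u²/(r c₂)). Then the cross coefficient (γ-3)/4 + ((γ-1)/2)λ vanishes, so the weighted character β̃ = h^{-λ}β satisfies ∂₁β̃ = -((1+γ)/4)h^{λ}β̃² + A₁(h^{-λ}α) - B₁β̃ + ((γ-1)/2)λ·(m u²/(r c₂))·β̃. -/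
theorem decoupled_weighted_riccati (γ m r u h β α A₁ B₁ Dβ Dh Dw lam : ℝ)
    (hγ1 : 1 < γ) (hγ3 : γ < 3) (hh : 0 < h) (hr : 0 < r) (hc₂ : u + h ≠ 0)
    (hlam : lam = (3 - γ) / (2 * (γ - 1)))
    (hRic : Dβ = -((1 + γ) / 4) * β ^ 2 - ((3 - γ) / 4) * α * β + A₁ * α - B₁ * β)
    (hDh : Dh = -((γ - 1) / 2) * h * (α + m * u ^ 2 / (r * (u + h))))
    -- Leibniz rule and chain rule: Dw = ∂₁(h^{-λ}β)
    (hLeib : Dw = (-lam) * h ^ (-lam - 1) * Dh * β + h ^ (-lam) * Dβ) :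
    (γ - 3) / 4 + ((γ - 1) / 2) * lam = 0 ∧
    Dw = -((1 + γ) / 4) * h ^ lam * (h ^ (-lam) * β) ^ 2 +
      A₁ * (h ^ (-lam) * α) - B₁ * (h ^ (-lam) * β) +
      ((γ - 1) / 2) * lam * (m * u ^ 2 / (r * (u + h))) * (h ^ (-lam) * β) := by
  have hg : γ - 1 ≠ 0 := by linarith
  have hcoef : (γ - 3) / 4 + ((γ - 1) / 2) * lam = 0 := by
    rw [hlam]; field_simp; ring
  refine ⟨hcoef, ?_⟩
  have hXY : h ^ lam * h ^ (-lam) = 1 := by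
    rw [← Real.rpow_add hh]; simp
  have e4 : h ^ (-lam - 1) = h ^ (-lam) / h := by
    rw [sub_eq_add_neg, Real.rpow_add hh, Real.rpow_neg_one, div_eq_mul_inv]
  have hinv : h⁻¹ * h = 1 := inv_mul_cancel₀ hh.ne'
  subst hLeib hRic hDh
  rw [e4]
  linear_combination (lam * ((γ - 1) / 2) * h ^ (-lam) * β *
      (α + m * u ^ 2 / (r * (u + h)))) * hinv +
    (h ^ (-lam) * α * β) * hcoef + (((1 + γ) / 4) * h ^ (-lam) * β ^ 2) * hXY
end

section
/- Let 1 < γ ≤ 3, C₀ > 0, and suppose (w,z) : Ω → ℝ² are C¹ functions on a domain Ω ⊂ ℝ² satisfying ∂_t z + c₁ ∂_r z = (m/r)uh and z ≥ 0 on the parabolic boundary (initial line and inflow boundary), where u = (w+z)/2 ≥ 0, h = ((γ-1)/4)(w-z) ≥ 0, c₁ = u - h, r ≥ b > 0, and m ≥ 1. If 1-characteristics through every point of Ω can be traced backward to the parabolic boundary, then z ≥ 0 throughout Ω. -/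
/-!
Along a 1-characteristic `η' = c₁`, the PDE says `d/dt z(η t, t) = (m/r) u h ≥ 0`, so `z` is
nondecreasing along it and inherits its sign from the point where it leaves the parabolic boundary.
-/

open Set

variable {E F : Type*} [NormedAddCommGroup E] [NormedSpace ℝ E]
  [NormedAddCommGroup F] [NormedSpace ℝ F]

theorem HasFDerivAt.hasDerivAt_comp_graph {f : E × ℝ → F} {f' : E × ℝ →L[ℝ] F}
    {η : ℝ → E} {v : E} {s : ℝ} (hf : HasFDerivAt f f' (η s, s)) (hη : HasDerivAt η v s) :
    HasDerivAt (fun t => f (η t, t)) (f' (v, 1)) s :=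
  hf.comp_hasDerivAt (f := fun t => (η t, t)) s (hη.prodMk (hasDerivAt_id s))

theorem le_along_characteristic {Ω : Set (E × ℝ)} {Z S : E × ℝ → ℝ} {c : E × ℝ → E}
    {DZ : E × ℝ → E × ℝ →L[ℝ] ℝ} (hZ : ∀ p ∈ Ω, HasFDerivAt Z (DZ p) p)
    (hPDE : ∀ p ∈ Ω, DZ p (c p, 1) = S p) (hS : ∀ p ∈ Ω, 0 ≤ S p)
    {η : ℝ → E} {t₀ t : ℝ} (ht : t₀ ≤ t) (hcont : ContinuousOn (fun s => Z (η s, s)) (Icc t₀ t))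
    (hη : ∀ s ∈ Ioo t₀ t, (η s, s) ∈ Ω ∧ HasDerivAt η (c (η s, s)) s) :
    Z (η t₀, t₀) ≤ Z (η t, t) := by
  have hderiv : ∀ s ∈ interior (Icc t₀ t),
      HasDerivWithinAt (fun s => Z (η s, s)) (S (η s, s)) (interior (Icc t₀ t)) s := by
    rw [interior_Icc]
    intro s hs
    obtain ⟨hΩ, hηs⟩ := hη s hs
    rw [← hPDE _ hΩ]
    exact ((hZ _ hΩ).hasDerivAt_comp_graph hηs).hasDerivWithinAt
  have hmono := monotoneOn_of_hasDerivWithinAt_nonneg (convex_Icc t₀ t) hcont hderiv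
    (by rw [interior_Icc]; exact fun s hs => hS _ (hη s hs).1)
  exact hmono (left_mem_Icc.mpr ht) (right_mem_Icc.mpr ht) ht

theorem riemann_invariant_z_nonneg_general (m b : ℝ)
    (hm : 1 ≤ m) (hb : 0 < b)
    (Ω B : Set (ℝ × ℝ))
    (Z U H C₁ : ℝ × ℝ → ℝ) (DZ : ℝ × ℝ → ℝ × ℝ →L[ℝ] ℝ)
    -- sign conditions on u, h and the spatial constraint r ≥ b > 0 on Ω
    (hUpos : ∀ p ∈ Ω, 0 ≤ U p)
    (hHpos : ∀ p ∈ Ω, 0 ≤ H p)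
    (hrb : ∀ p ∈ Ω, b ≤ p.1)
    -- Z is C¹ (differentiable) on Ω and satisfies the PDE ∂_t z + c₁ ∂_r z = (m/r) u h
    (hZdiff : ∀ p ∈ Ω, HasFDerivAt Z (DZ p) p)
    (hPDE : ∀ p ∈ Ω, DZ p (C₁ p, 1) = (m / p.1) * U p * H p)
    -- z ≥ 0 on the parabolic boundary B
    (hBnd : ∀ p ∈ B, 0 ≤ Z p)
    -- every point of Ω can be traced backward along a 1-characteristic to B
    (hchar : ∀ p ∈ Ω, ∃ (t₀ : ℝ) (η : ℝ → ℝ), t₀ ≤ p.2 ∧ η p.2 = p.1 ∧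
      (η t₀, t₀) ∈ B ∧
      ContinuousOn (fun s => Z (η s, s)) (Set.Icc t₀ p.2) ∧
      ∀ s ∈ Set.Ioc t₀ p.2, (η s, s) ∈ Ω ∧ HasDerivAt η (C₁ (η s, s)) s) :
    ∀ p ∈ Ω, 0 ≤ Z p := by
  intro p hp
  obtain ⟨t₀, η, ht₀, hηp, hB, hcont, hη⟩ := hchar p hp
  have hsource : ∀ q ∈ Ω, 0 ≤ m / q.1 * U q * H q := fun q hq => by
    have := hb.trans_le (hrb q hq)
    have := hUpos q hq
    have := hHpos q hq
    have : 0 ≤ m := zero_le_one.trans hm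
    positivity
  calc 0 ≤ Z (η t₀, t₀) := hBnd _ hB
    _ ≤ Z (η p.2, p.2) := le_along_characteristic hZdiff hPDE hsource ht₀ hcont
        fun s hs => hη s (Ioo_subset_Ioc_self hs)
    _ = Z p := by rw [hηp]

theorem riemann_invariant_z_nonneg (γ m b : ℝ)
    (hγ1 : 1 < γ) (hγ3 : γ ≤ 3) (hm : 1 ≤ m) (hb : 0 < b)
    (Ω B : Set (ℝ × ℝ))
    (W Z U H C₁ : ℝ × ℝ → ℝ) (DZ : ℝ × ℝ → ℝ × ℝ →L[ℝ] ℝ)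
    -- definitions of u, h, c₁ from the Riemann invariants
    (hU : ∀ p, U p = (W p + Z p) / 2)
    (hH : ∀ p, H p = ((γ - 1) / 4) * (W p - Z p))
    (hC₁ : ∀ p, C₁ p = U p - H p)
    -- sign conditions on u, h and the spatial constraint r ≥ b > 0 on Ω
    (hUpos : ∀ p ∈ Ω, 0 ≤ U p)
    (hHpos : ∀ p ∈ Ω, 0 ≤ H p)
    (hrb : ∀ p ∈ Ω, b ≤ p.1)
    -- Z is C¹ (differentiable) on Ω and satisfies the PDE ∂_t z + c₁ ∂_r z = (m/r) u h
    (hZdiff : ∀ p ∈ Ω, HasFDerivAt Z (DZ p) p)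
    (hPDE : ∀ p ∈ Ω, DZ p (C₁ p, 1) = (m / p.1) * U p * H p)
    -- z ≥ 0 on the parabolic boundary B
    (hBnd : ∀ p ∈ B, 0 ≤ Z p)
    -- every point of Ω can be traced backward along a 1-characteristic to B
    (hchar : ∀ p ∈ Ω, ∃ (t₀ : ℝ) (η : ℝ → ℝ), t₀ ≤ p.2 ∧ η p.2 = p.1 ∧
      (η t₀, t₀) ∈ B ∧
      ContinuousOn (fun s => Z (η s, s)) (Set.Icc t₀ p.2) ∧
      ∀ s ∈ Set.Ioc t₀ p.2, (η s, s) ∈ Ω ∧ HasDerivAt η (C₁ (η s, s)) s) :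
    ∀ p ∈ Ω, 0 ≤ Z p :=
  riemann_invariant_z_nonneg_general m b hm hb Ω B Z U H C₁ DZ hUpos hHpos hrb hZdiff hPDE hBnd
    hchar
end

section
/- Let M̂ > 0, K̂ > 0 with M̂ ≥ 2K̂ + 2, let T₀ > 0 and ε > 0 with ε·e^{M̂T₀} < 1. Suppose X, Y : [0,T] → ℝ (T ≤ T₀) are differentiable with X(0) > 0, Y(0) > 0, and at any time t where Y(t) = 0 and X(t) ≥ 0 one has Y'(t) ≥ ε e^{M̂t}(M̂ - 2K̂ - ε e^{M̂t}) > 0, and symmetrically at any time where X(t) = 0 and Y(t) ≥ 0 one has X'(t) > 0. Then X(t) > 0 and Y(t) > 0 for all t ∈ [0,T]. -/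
/-!
Where a coordinate vanishes while all coordinates are nonnegative, its derivative is positive, so
it is positive just after and negative just before that time. The first fact and continuous
induction on `[a, b]` keep the trajectory in the closed orthant; the second then forbids any
coordinate from vanishing after `a`.
-/

open Set Filter Topology

section SignNearPoint

variable {f : ℝ → ℝ} {f' x : ℝ}

theorem HasDerivAt.eventually_lt_nhdsGT (hf : HasDerivAt f f' x) (hf' : 0 < f') :
    ∀ᶠ y in 𝓝[>] x, f x < f y := by
  have hslope : ∀ᶠ y in 𝓝[>] x, 0 < slope f x y :=
    (hasDerivAt_iff_tendsto_slope_left_right.mp hf).2.eventually (eventually_gt_nhds hf')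
  filter_upwards [hslope, self_mem_nhdsWithin] with y hy hxy
  rw [slope_def_field, div_pos_iff_of_pos_right (sub_pos.mpr hxy)] at hy
  exact sub_pos.mp hy

theorem HasDerivAt.eventually_lt_nhdsLT (hf : HasDerivAt f f' x) (hf' : 0 < f') :
    ∀ᶠ y in 𝓝[<] x, f y < f x := by
  have hslope : ∀ᶠ y in 𝓝[<] x, 0 < slope f x y :=
    (hasDerivAt_iff_tendsto_slope_left_right.mp hf).1.eventually (eventually_gt_nhds hf')
  filter_upwards [hslope, self_mem_nhdsWithin] with y hy hyx
  rw [slope_comm, slope_def_field, div_pos_iff_of_pos_right (sub_pos.mpr hyx)] at hy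
  exact sub_pos.mp hy

end SignNearPoint

section Orthant

variable {ι : Type*} {f f' : ι → ℝ → ℝ} {a b : ℝ}

theorem isClosed_inter_Icc_of_forall_nonneg (hf : ∀ i, ContinuousOn (f i) (Icc a b)) :
    IsClosed ({t | ∀ i, 0 ≤ f i t} ∩ Icc a b) := by
  rw [inter_comm]
  exact (continuousOn_pi.mpr hf).preimage_isClosed_of_isClosed (t := Ici 0) isClosed_Icc
    isClosed_Ici

variable (hf : ∀ i, ∀ t ∈ Icc a b, HasDerivAt (f i) (f' i t) t)
  (hbdry : ∀ i, ∀ t ∈ Icc a b, f i t = 0 → (∀ j, 0 ≤ f j t) → 0 < f' i t)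
include hf hbdry

theorem forall_nonneg_of_hasDerivAt_pos_on_boundary [Finite ι] (ha : ∀ i, 0 ≤ f i a) :
    ∀ t ∈ Icc a b, ∀ i, 0 ≤ f i t := by
  refine (isClosed_inter_Icc_of_forall_nonneg fun i ↦ ?_).Icc_subset_of_forall_mem_nhdsWithin
    ha fun x ⟨hx, hxab⟩ ↦ ?_
  · exact fun t ht ↦ (hf i t ht).continuousAt.continuousWithinAt
  have hxIcc : x ∈ Icc a b := Ico_subset_Icc_self hxab
  refine eventually_all.mpr fun i ↦ ?_
  rcases (hx i).eq_or_lt with hzero | hpos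
  · filter_upwards [(hf i x hxIcc).eventually_lt_nhdsGT (hbdry i x hxIcc hzero.symm hx)]
      with y hy using hzero ▸ hy.le
  · exact nhdsWithin_le_nhds <|
      (hf i x hxIcc).continuousAt.eventually (eventually_gt_nhds hpos) |>.mono fun _ ↦ le_of_lt

theorem forall_pos_of_hasDerivAt_pos_on_boundary [Finite ι] (ha : ∀ i, 0 < f i a) :
    ∀ t ∈ Icc a b, ∀ i, 0 < f i t := by
  have hnonneg := forall_nonneg_of_hasDerivAt_pos_on_boundary hf hbdry fun i ↦ (ha i).le
  intro t ht i
  refine (hnonneg t ht i).lt_of_ne' fun hzero ↦ ?_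
  have hat : a < t := ht.1.lt_of_ne (by rintro rfl; exact (ha i).ne' hzero)
  obtain ⟨y, hy_neg, hy_mem⟩ :=
    ((hf i t ht).eventually_lt_nhdsLT (hbdry i t ht hzero (hnonneg t ht))).and
      (Ioo_mem_nhdsLT hat) |>.exists
  exact (hnonneg y ⟨hy_mem.1.le, hy_mem.2.le.trans ht.2⟩ i).not_gt (hzero ▸ hy_neg)

end Orthant

theorem positive_quadrant_invariant_general (Mh Kh ε T : ℝ)
    (X Y X' Y' : ℝ → ℝ)
    (hXd : ∀ t ∈ Set.Icc (0 : ℝ) T, HasDerivAt X (X' t) t)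
    (hYd : ∀ t ∈ Set.Icc (0 : ℝ) T, HasDerivAt Y (Y' t) t)
    (hX0 : 0 < X 0) (hY0 : 0 < Y 0)
    (hYb : ∀ t ∈ Set.Icc (0 : ℝ) T, Y t = 0 → 0 ≤ X t →
      ε * Real.exp (Mh * t) * (Mh - 2 * Kh - ε * Real.exp (Mh * t)) ≤ Y' t ∧
      0 < ε * Real.exp (Mh * t) * (Mh - 2 * Kh - ε * Real.exp (Mh * t)))
    (hXb : ∀ t ∈ Set.Icc (0 : ℝ) T, X t = 0 → 0 ≤ Y t → 0 < X' t) :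
    ∀ t ∈ Set.Icc (0 : ℝ) T, 0 < X t ∧ 0 < Y t := by
  have hpos := forall_pos_of_hasDerivAt_pos_on_boundary (f := ![X, Y]) (f' := ![X', Y'])
    (fun i ↦ by fin_cases i <;> assumption)
    (fun i t ht hzero hnonneg ↦ by
      fin_cases i
      · exact hXb t ht hzero (hnonneg 1)
      · obtain ⟨hlower, hrate⟩ := hYb t ht hzero (hnonneg 0)
        exact hrate.trans_le hlower)
    (fun i ↦ by fin_cases i <;> assumption)
  exact fun t ht ↦ ⟨hpos t ht 0, hpos t ht 1⟩

theorem positive_quadrant_invariant (Mh Kh T₀ ε T : ℝ)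
    (hKh : 0 < Kh) (hMh : 2 * Kh + 2 ≤ Mh) (hT₀ : 0 < T₀)
    (hε : 0 < ε) (hεT : ε * Real.exp (Mh * T₀) < 1)
    (hT : T ≤ T₀) (hT0 : 0 ≤ T)
    (X Y X' Y' : ℝ → ℝ)
    (hXd : ∀ t ∈ Set.Icc (0 : ℝ) T, HasDerivAt X (X' t) t)
    (hYd : ∀ t ∈ Set.Icc (0 : ℝ) T, HasDerivAt Y (Y' t) t)
    (hX0 : 0 < X 0) (hY0 : 0 < Y 0)
    (hYb : ∀ t ∈ Set.Icc (0 : ℝ) T, Y t = 0 → 0 ≤ X t →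
      ε * Real.exp (Mh * t) * (Mh - 2 * Kh - ε * Real.exp (Mh * t)) ≤ Y' t ∧
      0 < ε * Real.exp (Mh * t) * (Mh - 2 * Kh - ε * Real.exp (Mh * t)))
    (hXb : ∀ t ∈ Set.Icc (0 : ℝ) T, X t = 0 → 0 ≤ Y t → 0 < X' t) :
    ∀ t ∈ Set.Icc (0 : ℝ) T, 0 < X t ∧ 0 < Y t :=
  positive_quadrant_invariant_general Mh Kh ε T X Y X' Y' hXd hYd hX0 hY0 hYb hXb
end

section
/- Let b > 0, C₀ > 0, Ĉ > 0, m ∈ {1,2}, 1 < γ < 3, and set σ = m(3-γ)/4 ∈ (0,1). Suppose y : [0,T) → ℝ is differentiable with y(0) < 0 and y'(t) ≤ -((1+γ)/8)·Ĉ·(b/(b+2C₀t))^σ·y(t)² for all t. Then T ≤ t* where t* = (b/(2C₀))·[(1 + (4C₀(4 - m(3-γ)))/((-y(0))(γ+1)Ĉ b))^{4/(4-m(3-γ))} - 1]. -/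
/-!
Along the solution, `y` stays negative, and with `G` a primitive of the weight
`g t = ((1 + γ) / 8) Ĉ (b / (b + 2 C₀ t)) ^ σ` the function `-1 / y + G` has derivative
`y' / y² + g ≤ 0`. Hence `G t - G 0 ≤ -1 / y 0 + 1 / y t < -1 / y 0` as long as the solution
exists. The primitive is explicit, `G t ∝ (b + 2 C₀ t) ^ (1 - σ)`, and `t*` is exactly the time at
which `G t* - G 0 = -1 / y 0`.
-/

open Set

lemma antitoneOn_Ico_of_hasDerivAt_nonpos {f f' : ℝ → ℝ} {a b : ℝ}
    (hf : ∀ t ∈ Ico a b, HasDerivAt f (f' t) t) (hf' : ∀ t ∈ Ico a b, f' t ≤ 0) :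
    AntitoneOn f (Ico a b) :=
  antitoneOn_of_hasDerivWithinAt_nonpos (convex_Ico a b)
    (fun t ht => (hf t ht).continuousAt.continuousWithinAt)
    (fun t ht => (hf t (interior_subset ht)).hasDerivWithinAt)
    (fun t ht => hf' t (interior_subset ht))

section Riccati

variable {y y' g G : ℝ → ℝ} {a T : ℝ}

lemma neg_of_riccati (hy : ∀ s ∈ Ico a T, HasDerivAt y (y' s) s)
    (hg : ∀ s ∈ Ico a T, 0 ≤ g s) (hyg : ∀ s ∈ Ico a T, y' s ≤ -g s * y s ^ 2) (hya : y a < 0) :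
    ∀ s ∈ Ico a T, y s < 0 := by
  have hanti : AntitoneOn y (Ico a T) := antitoneOn_Ico_of_hasDerivAt_nonpos hy fun s hs =>
    (hyg s hs).trans (by nlinarith [hg s hs, sq_nonneg (y s)])
  intro s hs
  exact (hanti ⟨le_rfl, hs.1.trans_lt hs.2⟩ hs hs.1).trans_lt hya

lemma antitoneOn_neg_inv_add_of_riccati (hy : ∀ s ∈ Ico a T, HasDerivAt y (y' s) s)
    (hG : ∀ s ∈ Ico a T, HasDerivAt G (g s) s) (hg : ∀ s ∈ Ico a T, 0 ≤ g s)
    (hyg : ∀ s ∈ Ico a T, y' s ≤ -g s * y s ^ 2) (hya : y a < 0) :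
    AntitoneOn (fun s => -(y s)⁻¹ + G s) (Ico a T) := by
  have hneg := neg_of_riccati hy hg hyg hya
  refine antitoneOn_Ico_of_hasDerivAt_nonpos (f' := fun s => y' s / y s ^ 2 + g s)
    (fun s hs => ?_) (fun s hs => ?_)
  · exact (((hy s hs).inv (hneg s hs).ne).neg.add (hG s hs)).congr_deriv (by ring)
  · have hy2 : 0 < y s ^ 2 := by nlinarith [hneg s hs]
    have : y' s / y s ^ 2 ≤ -g s := by rw [div_le_iff₀ hy2]; linarith [hyg s hs]
    linarith

lemma riccati_lifespan_le (hy : ∀ s ∈ Ico a T, HasDerivAt y (y' s) s)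
    (hG : ∀ s ∈ Ico a T, HasDerivAt G (g s) s) (hg : ∀ s ∈ Ico a T, 0 ≤ g s)
    (hyg : ∀ s ∈ Ico a T, y' s ≤ -g s * y s ^ 2) (hya : y a < 0) {t : ℝ} (hat : a ≤ t)
    (hGt : (-y a)⁻¹ ≤ G t - G a) : T ≤ t := by
  by_contra! htT
  have ht : t ∈ Ico a T := ⟨hat, htT⟩
  have hmono : -(y t)⁻¹ + G t ≤ -(y a)⁻¹ + G a :=
    antitoneOn_neg_inv_add_of_riccati hy hG hg hyg hya ⟨le_rfl, hat.trans_lt htT⟩ ht hat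
  have hyt : (y t)⁻¹ < 0 := inv_lt_zero.mpr (neg_of_riccati hy hg hyg hya t ht)
  rw [inv_neg] at hGt
  linarith

end Riccati

section RpowWeight

variable {b c σ : ℝ}

noncomputable def rpowWeightPrimitive (b c σ t : ℝ) : ℝ :=
  b ^ σ * (b + c * t) ^ (1 - σ) / (c * (1 - σ))

lemma hasDerivAt_rpowWeightPrimitive (hb : 0 ≤ b) (hc : c ≠ 0) (hσ : σ ≠ 1) {t : ℝ}
    (ht : 0 < b + c * t) :
    HasDerivAt (rpowWeightPrimitive b c σ) ((b / (b + c * t)) ^ σ) t := by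
  have hlin : HasDerivAt (fun s => b + c * s) c t := by
    simpa using ((hasDerivAt_id t).const_mul c).const_add b
  have hpow := ((Real.hasDerivAt_rpow_const (p := 1 - σ) (Or.inl ht.ne')).comp t hlin)
  refine ((hpow.const_mul (b ^ σ)).div_const (c * (1 - σ))).congr_deriv ?_
  have hσ' : 1 - σ ≠ 0 := sub_ne_zero.mpr (Ne.symm hσ)
  rw [Real.div_rpow hb ht.le, show 1 - σ - 1 = -σ by ring, Real.rpow_neg ht.le]
  field_simp

lemma rpowWeightPrimitive_sub_zero (hb : 0 < b) (hc : c ≠ 0) (hσ : σ ≠ 1) {A : ℝ} (hA : 0 ≤ A) :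
    rpowWeightPrimitive b c σ (b / c * (A ^ (1 / (1 - σ)) - 1)) - rpowWeightPrimitive b c σ 0
      = b * (A - 1) / (c * (1 - σ)) := by
  have hσ' : 1 - σ ≠ 0 := sub_ne_zero.mpr (Ne.symm hσ)
  have hend : b + c * (b / c * (A ^ (1 / (1 - σ)) - 1)) = b * A ^ (1 / (1 - σ)) := by
    field_simp; ring
  have hb1 : b ^ σ * b ^ (1 - σ) = b := by rw [← Real.rpow_add hb]; norm_num
  have hbA : b ^ σ * (b ^ (1 - σ) * A) = b * A := by rw [← mul_assoc, hb1]
  unfold rpowWeightPrimitive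
  rw [hend, Real.mul_rpow hb.le (Real.rpow_nonneg hA _), ← Real.rpow_mul hA,
    one_div_mul_cancel hσ', Real.rpow_one, mul_zero, add_zero, hbA, hb1]
  ring

end RpowWeight

theorem riccati_blowup_time_bound_general (b C₀ Ch γ T σ : ℝ) (m : ℕ)
    (hm : m = 1 ∨ m = 2)
    (hb : 0 < b) (hC₀ : 0 < C₀) (hCh : 0 < Ch)
    (hγ1 : 1 < γ)
    (hσ : σ = (m : ℝ) * (3 - γ) / 4)
    (y y' : ℝ → ℝ)
    (hy0 : y 0 < 0)
    (hd : ∀ t ∈ Set.Ico (0 : ℝ) T, HasDerivAt y (y' t) t)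
    (hi : ∀ t ∈ Set.Ico (0 : ℝ) T,
      y' t ≤ -((1 + γ) / 8) * Ch * (b / (b + 2 * C₀ * t)) ^ σ * (y t) ^ 2) :
    T ≤ (b / (2 * C₀)) *
      ((1 + (4 * C₀ * (4 - (m : ℝ) * (3 - γ))) / ((-y 0) * (γ + 1) * Ch * b)) ^
          (4 / (4 - (m : ℝ) * (3 - γ))) - 1) := by
  set D := 4 - (m : ℝ) * (3 - γ) with hD_def
  have hD : 0 < D := by rcases hm with rfl | rfl <;> norm_num [hD_def] <;> linarith
  have h1σ : 1 - σ = D / 4 := by rw [hσ, hD_def]; ring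
  have hσ1 : σ ≠ 1 := by intro h; rw [h] at h1σ; linarith
  have hexp : 4 / D = 1 / (1 - σ) := by rw [h1σ]; field_simp
  have hK : 0 < (1 + γ) / 8 * Ch := mul_pos (by linarith) hCh
  have hA : 1 ≤ 1 + 4 * C₀ * D / (-y 0 * (γ + 1) * Ch * b) :=
    le_add_of_nonneg_right <| div_nonneg (by positivity)
      (mul_pos (mul_pos (mul_pos (neg_pos.mpr hy0) (by linarith)) hCh) hb).le
  have hbase : ∀ s ∈ Ico (0 : ℝ) T, 0 < b + 2 * C₀ * s := fun s hs => by
    nlinarith [hs.1]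
  refine riccati_lifespan_le (g := fun s => (1 + γ) / 8 * Ch * (b / (b + 2 * C₀ * s)) ^ σ)
    (G := fun s => (1 + γ) / 8 * Ch * rpowWeightPrimitive b (2 * C₀) σ s) hd
    (fun s hs =>
      (hasDerivAt_rpowWeightPrimitive hb.le (by positivity) hσ1 (hbase s hs)).const_mul _)
    (fun s hs => mul_nonneg hK.le (Real.rpow_nonneg (div_pos hb (hbase s hs)).le σ))
    (fun s hs => (hi s hs).trans_eq (by ring)) hy0 ?_ ?_
  · exact mul_nonneg (by positivity) (sub_nonneg.mpr (Real.one_le_rpow hA (by positivity)))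
  · refine le_of_eq ?_
    rw [hexp, ← mul_sub, rpowWeightPrimitive_sub_zero hb (by positivity) hσ1 (by linarith), h1σ]
    field_simp
    ring

theorem riccati_blowup_time_bound (b C₀ Ch γ T σ : ℝ) (m : ℕ)
    (hm : m = 1 ∨ m = 2)
    (hb : 0 < b) (hC₀ : 0 < C₀) (hCh : 0 < Ch)
    (hγ1 : 1 < γ) (hγ3 : γ < 3)
    (hσ : σ = (m : ℝ) * (3 - γ) / 4)
    (hT : 0 < T)
    (y y' : ℝ → ℝ)
    (hy0 : y 0 < 0)
    (hd : ∀ t ∈ Set.Ico (0 : ℝ) T, HasDerivAt y (y' t) t)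
    (hi : ∀ t ∈ Set.Ico (0 : ℝ) T,
      y' t ≤ -((1 + γ) / 8) * Ch * (b / (b + 2 * C₀ * t)) ^ σ * (y t) ^ 2) :
    T ≤ (b / (2 * C₀)) *
      ((1 + (4 * C₀ * (4 - (m : ℝ) * (3 - γ))) / ((-y 0) * (γ + 1) * Ch * b)) ^
          (4 / (4 - (m : ℝ) * (3 - γ))) - 1) :=
  riccati_blowup_time_bound_general b C₀ Ch γ T σ m hm hb hC₀ hCh hγ1 hσ y y' hy0 hd hi
end
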